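/- arXiv:0812.4666 — 2 statements merged into one kernel-verified Lean document; each statement's English description precedes it below -/
import Mathlib

section
/- Let α, β be real numbers with -1/2 < α < β. Then for every λ ∈ ℂ and every x ∈ ℝ, E_β(λx) = a_{α,β} ∫_{-1}^{1} E_α(λxt)(1-t²)^{β-α-1}(1+t)|t|^{2α+1} dt, where a_{α,β} = Γ(β+1)/(Γ(β-α)Γ(α+1)). -/
open MeasureTheory Filter
open scoped Real

noncomputable section

/-- The coefficients `b_n(α)` in the power series of the Dunkl kernel. -/
def bCoeff (α : ℝ) (n : ℕ) : ℝ :=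
  if n % 2 = 0 then
    2 ^ n * (n / 2).factorial * Real.Gamma ((n / 2 : ℕ) + α + 1) / Real.Gamma (α + 1)
  else
    2 ^ n * (n / 2).factorial * Real.Gamma ((n / 2 : ℕ) + α + 2) / Real.Gamma (α + 1)

/-- The Dunkl kernel `E_α`, as an entire function of a complex variable. -/
def dunklKernel (α : ℝ) (z : ℂ) : ℂ := ∑' n : ℕ, z ^ n / (bCoeff α n : ℂ)

/-- The constant `a_{α,β}`. -/
def sonineConst (α β : ℝ) : ℝ :=
  Real.Gamma (β + 1) / (Real.Gamma (β - α) * Real.Gamma (α + 1))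

/-- The Dunkl Sonine transform `S_{α,β}`. -/
def sonine (α β : ℝ) (f : ℝ → ℂ) (x : ℝ) : ℂ :=
  (sonineConst α β : ℂ) *
    ∫ t in (-1 : ℝ)..1, f (x * t) *
      (((1 - t ^ 2) ^ (β - α - 1) * (1 + t) * |t| ^ (2 * α + 1) : ℝ) : ℂ)

/-- The dual Dunkl Sonine transform `ᵗS_{α,β}`. -/
def dualSonine (α β : ℝ) (f : ℝ → ℂ) (x : ℝ) : ℂ :=
  (sonineConst α β : ℂ) *
    ∫ y in {y : ℝ | |x| ≤ |y|},
      ((Real.sign y * (y ^ 2 - x ^ 2) ^ (β - α - 1) * (x + y) : ℝ) : ℂ) * f y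

/-- The Dunkl transform `F_α`. -/
def dunklTransform (α : ℝ) (f : ℝ → ℂ) (ξ : ℝ) : ℂ :=
  ∫ x : ℝ, dunklKernel α (-(Complex.I * ξ * x)) * f x * ((|x| ^ (2 * α + 1) : ℝ) : ℂ)

/-- The constant `a_α`. -/
def intertwinerConst (α : ℝ) : ℝ :=
  Real.Gamma (α + 1) / (Real.sqrt π * Real.Gamma (α + 1 / 2))

/-- The Dunkl intertwining operator `V_α`. -/
def dunklIntertwiner (α : ℝ) (f : ℝ → ℂ) (x : ℝ) : ℂ :=
  (intertwinerConst α : ℂ) *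
    ∫ t in (-1 : ℝ)..1, f (x * t) * (((1 - t ^ 2) ^ (α - 1 / 2) * (1 + t) : ℝ) : ℂ)

/-- The dual Dunkl intertwining operator `ᵗV_α`. -/
def dualIntertwiner (α : ℝ) (f : ℝ → ℂ) (x : ℝ) : ℂ :=
  (intertwinerConst α : ℂ) *
    ∫ y in {y : ℝ | |x| ≤ |y|},
      ((Real.sign y * (y ^ 2 - x ^ 2) ^ (α - 1 / 2) * (x + y) : ℝ) : ℂ) * f y

/-- The Dunkl operator `Λ_γ`. -/
def dunklOp (γ : ℝ) (f : ℝ → ℂ) (x : ℝ) : ℂ :=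
  if x = 0 then ((2 * γ + 2 : ℝ) : ℂ) * deriv f 0
  else deriv f x + (((2 * γ + 1) / x : ℝ) : ℂ) * ((f x - f (-x)) / 2)

/-- The Lizorkin moment condition defining the space `Φ_γ` (within the Schwartz space). -/
def lizorkin (γ : ℝ) (f : ℝ → ℂ) : Prop :=
  ∀ k : ℕ, ∫ y : ℝ, f y * ((y ^ k * |y| ^ (2 * γ + 1) : ℝ) : ℂ) = 0

/-- The constant `c_γ`. -/
def cConst (γ : ℝ) : ℝ := 1 / (2 ^ (γ + 1) * Real.Gamma (γ + 1)) ^ 2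

/-!
Expanding `E_α(λxt)` in its power series and integrating term by term (dominated convergence:
`|t| ≤ 1` and the weight `w = sonineWeight α β` is integrable), the formula reduces to the
moment identity `a_{α,β} ∫_{-1}^1 t^n w(t) dt = b_n(α) / b_n(β)`. Folding `[-1, 0]` onto
`[0, 1]`, the odd part of `t^n (1 + t)` cancels and the moment becomes
`2 ∫_0^1 t^{2k+2α+1} (1 - t²)^{β-α-1} dt` with `k = ⌈n/2⌉`; the substitution `u = t²` turns
this into the Beta integral `B(k + α + 1, β - α)`, and `Γ(k + α + 1) / Γ(α + 1)` is exactly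
the Gamma factor of `b_n(α)`.
-/

namespace DunklSonine

open Set

theorem ofReal_rpow_mul_one_sub_rpow {a b t : ℝ} (ht : t ∈ Ioo (0 : ℝ) 1) :
    ((t ^ (a - 1) * (1 - t) ^ (b - 1) : ℝ) : ℂ) =
      (t : ℂ) ^ ((a : ℂ) - 1) * (1 - (t : ℂ)) ^ ((b : ℂ) - 1) := by
  rw [Complex.ofReal_mul, Complex.ofReal_cpow ht.1.le, Complex.ofReal_cpow (by linarith [ht.2])]
  push_cast
  rfl

theorem integrableOn_rpow_mul_one_sub_rpow {a b : ℝ} (ha : 0 < a) (hb : 0 < b) :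
    IntegrableOn (fun t : ℝ => t ^ (a - 1) * (1 - t) ^ (b - 1)) (Ioo 0 1) := by
  have h := Complex.betaIntegral_convergent (u := a) (v := b) (by simpa) (by simpa)
  rw [intervalIntegrable_iff_integrableOn_Ioo_of_le zero_le_one] at h
  have := (h.congr_fun (fun t ht => (ofReal_rpow_mul_one_sub_rpow ht).symm) measurableSet_Ioo).re
  simpa [IntegrableOn] using this

theorem integral_rpow_mul_one_sub_rpow {a b : ℝ} (ha : 0 < a) (hb : 0 < b) :
    ∫ t in Ioo (0 : ℝ) 1, t ^ (a - 1) * (1 - t) ^ (b - 1) =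
      Real.Gamma a * Real.Gamma b / Real.Gamma (a + b) := by
  have h := Complex.betaIntegral_eq_Gamma_mul_div a b (by simpa) (by simpa)
  rw [Complex.betaIntegral, intervalIntegral.integral_of_le zero_le_one,
    integral_Ioc_eq_integral_Ioo, ← setIntegral_congr_fun measurableSet_Ioo
      (fun t ht => ofReal_rpow_mul_one_sub_rpow (a := a) (b := b) ht), integral_complex_ofReal,
    ← Complex.ofReal_add, Complex.Gamma_ofReal, Complex.Gamma_ofReal, Complex.Gamma_ofReal] at h
  exact_mod_cast h

theorem image_sq_Ioo_zero_one : (fun t : ℝ => t ^ 2) '' Ioo 0 1 = Ioo 0 1 := by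
  simpa using (continuous_pow (M := ℝ) 2).continuousOn.image_Ioo_of_strictMonoOn zero_le_one
    ((pow_left_strictMonoOn₀ two_ne_zero).mono fun _ ht => ht.1)

theorem hasDerivWithinAt_sq_Ioo_zero_one :
    ∀ t ∈ Ioo (0 : ℝ) 1, HasDerivWithinAt (fun t : ℝ => t ^ 2) (2 * t) (Ioo 0 1) t :=
  fun t _ => by simpa using (hasDerivAt_pow 2 t).hasDerivWithinAt

theorem monotoneOn_sq_Ioo_zero_one : MonotoneOn (fun t : ℝ => t ^ 2) (Ioo 0 1) :=
  (pow_left_strictMonoOn₀ two_ne_zero).monotoneOn.mono fun _ ht => ht.1.le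

theorem integral_Ioo_comp_sq (g : ℝ → ℝ) :
    ∫ t in Ioo (0 : ℝ) 1, 2 * t * g (t ^ 2) = ∫ u in Ioo (0 : ℝ) 1, g u := by
  simpa [image_sq_Ioo_zero_one] using (integral_image_eq_integral_deriv_smul_of_monotoneOn
    measurableSet_Ioo hasDerivWithinAt_sq_Ioo_zero_one monotoneOn_sq_Ioo_zero_one g).symm

theorem integrableOn_Ioo_comp_sq_iff (g : ℝ → ℝ) :
    IntegrableOn (fun t => 2 * t * g (t ^ 2)) (Ioo 0 1) ↔ IntegrableOn g (Ioo 0 1) := by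
  simpa [image_sq_Ioo_zero_one] using (integrableOn_image_iff_integrableOn_deriv_smul_of_monotoneOn
    measurableSet_Ioo hasDerivWithinAt_sq_Ioo_zero_one monotoneOn_sq_Ioo_zero_one g).symm

theorem mul_rpow_sq_eq_rpow {t : ℝ} (ht : 0 < t) (a : ℝ) :
    t * (t ^ 2) ^ (a - 1) = t ^ (2 * a - 1) := by
  rw [← Real.rpow_natCast, ← Real.rpow_mul ht.le, show 2 * a - 1 = 1 + (2 : ℕ) * (a - 1) by
    push_cast; ring, Real.rpow_add ht, Real.rpow_one]

theorem rpow_mul_one_sub_sq_rpow_eqOn (a b : ℝ) :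
    EqOn (fun t : ℝ => t ^ (2 * a - 1) * (1 - t ^ 2) ^ (b - 1))
      (fun t => 2 * t * ((t ^ 2) ^ (a - 1) * (1 - t ^ 2) ^ (b - 1)) / 2) (Ioo 0 1) :=
  fun t ht => by
    dsimp only
    rw [← mul_rpow_sq_eq_rpow ht.1]
    ring

theorem intervalIntegrable_rpow_mul_one_sub_sq_rpow {a b : ℝ} (ha : 0 < a) (hb : 0 < b) :
    IntervalIntegrable (fun t : ℝ => t ^ (2 * a - 1) * (1 - t ^ 2) ^ (b - 1)) volume 0 1 := by
  rw [intervalIntegrable_iff_integrableOn_Ioo_of_le zero_le_one]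
  have h := (integrableOn_Ioo_comp_sq_iff _).2 (integrableOn_rpow_mul_one_sub_rpow ha hb)
  exact IntegrableOn.congr_fun (h.div_const 2) (rpow_mul_one_sub_sq_rpow_eqOn a b).symm
    measurableSet_Ioo

theorem integral_rpow_mul_one_sub_sq_rpow {a b : ℝ} (ha : 0 < a) (hb : 0 < b) :
    ∫ t in (0 : ℝ)..1, t ^ (2 * a - 1) * (1 - t ^ 2) ^ (b - 1) =
      Real.Gamma a * Real.Gamma b / Real.Gamma (a + b) / 2 := by
  rw [intervalIntegral.integral_of_le zero_le_one, integral_Ioc_eq_integral_Ioo,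
    setIntegral_congr_fun measurableSet_Ioo (rpow_mul_one_sub_sq_rpow_eqOn a b), integral_div,
    integral_Ioo_comp_sq (fun u => u ^ (a - 1) * (1 - u) ^ (b - 1)),
    integral_rpow_mul_one_sub_rpow ha hb]

theorem intervalIntegrable_neg_self_of_even {E : Type*} [NormedAddCommGroup E] {f : ℝ → E}
    (heven : ∀ x, f (-x) = f x) {a : ℝ} (hf : IntervalIntegrable f volume 0 a) :
    IntervalIntegrable f volume (-a) a := by
  have h := (IntervalIntegrable.iff_comp_neg (f := f)).mp hf
  simp only [heven, neg_zero] at h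
  exact h.symm.trans hf

theorem integral_neg_self_eq_integral_add_comp_neg {E : Type*} [NormedAddCommGroup E]
    [NormedSpace ℝ E] {f : ℝ → E} {a : ℝ} (hf : IntervalIntegrable f volume (-a) a) :
    ∫ x in -a..a, f x = ∫ x in 0..a, (f x + f (-x)) := by
  have h0 : (0 : ℝ) ∈ uIcc (-a) a := by
    rw [mem_uIcc]
    rcases le_total 0 a with h | h
    · exact Or.inl ⟨by linarith, h⟩
    · exact Or.inr ⟨h, by linarith⟩
  have hleft : IntervalIntegrable f volume (-a) 0 := hf.mono_set (uIcc_subset_uIcc_left h0)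
  have hright : IntervalIntegrable f volume 0 a := hf.mono_set (uIcc_subset_uIcc_right h0)
  have hneg : IntervalIntegrable (fun x => f (-x)) volume 0 a := by
    simpa using (IntervalIntegrable.iff_comp_neg (f := f)).mp hleft.symm
  rw [← intervalIntegral.integral_add_adjacent_intervals hleft hright,
    intervalIntegral.integral_add hright hneg, intervalIntegral.integral_comp_neg, neg_zero,
    add_comm]

theorem pow_mul_one_add_add_neg_pow_mul_one_sub (t : ℝ) (n : ℕ) :
    t ^ n * (1 + t) + (-t) ^ n * (1 - t) = 2 * t ^ (2 * ((n + 1) / 2)) := by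
  obtain ⟨m, rfl | rfl⟩ := Nat.even_or_odd' n
  · rw [(even_two_mul m).neg_pow, show (2 * m + 1) / 2 = m by omega]
    ring
  · rw [(odd_two_mul_add_one m).neg_pow, show (2 * m + 1 + 1) / 2 = m + 1 by omega]
    ring

theorem hasSum_integral_tsum_mul_pow {a : ℕ → ℂ} (ha : Summable fun n => ‖a n‖) {w : ℝ → ℂ}
    (hw : IntervalIntegrable w volume (-1) 1) :
    HasSum (fun n => a n * ∫ t in (-1 : ℝ)..1, (t : ℂ) ^ n * w t)
      (∫ t in (-1 : ℝ)..1, (∑' n, a n * (t : ℂ) ^ n) * w t) := by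
  have hpow : ∀ n, ∀ t ∈ uIoc (-1 : ℝ) 1, ‖(t : ℂ) ^ n‖ ≤ 1 := by
    intro n t ht
    rw [uIoc_of_le (by norm_num)] at ht
    rw [norm_pow, Complex.norm_real, Real.norm_eq_abs]
    exact pow_le_one₀ (abs_nonneg t) (abs_le.2 ⟨ht.1.le, ht.2⟩)
  have hnorm_le : ∀ n, ∀ t ∈ uIoc (-1 : ℝ) 1, ‖a n * ((t : ℂ) ^ n * w t)‖ ≤ ‖a n‖ * ‖w t‖ :=
    fun n t ht => by
      rw [norm_mul, norm_mul]
      gcongr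
      exact mul_le_of_le_one_left (norm_nonneg _) (hpow n t ht)
  simp_rw [← intervalIntegral.integral_const_mul]
  refine intervalIntegral.hasSum_integral_of_dominated_convergence (fun n t => ‖a n‖ * ‖w t‖)
    (fun n => ?_) (fun n => ae_of_all _ (hnorm_le n)) (ae_of_all _ fun _ _ => ha.mul_right _)
    ?_ (ae_of_all _ fun t ht => ?_)
  · exact (intervalIntegrable_iff.1 ((hw.continuousOn_mul (g := fun t : ℝ => (t : ℂ) ^ n)
      (by fun_prop)).const_mul (a n))).aestronglyMeasurable
  · simp_rw [tsum_mul_right]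
    exact hw.norm.const_mul _
  · have hsum : Summable fun n => a n * (t : ℂ) ^ n := .of_norm_bounded ha fun n => by
      rw [norm_mul]
      exact mul_le_of_le_one_right (norm_nonneg _) (hpow n t ht)
    simpa only [mul_assoc] using hsum.hasSum.mul_right (w t)

section

variable {α β : ℝ}

theorem bCoeff_eq (α : ℝ) (n : ℕ) :
    bCoeff α n =
      2 ^ n * (n / 2).factorial * Real.Gamma (((n + 1) / 2 : ℕ) + α + 1) / Real.Gamma (α + 1) := by
  unfold bCoeff
  split_ifs with h
  · rw [show (n + 1) / 2 = n / 2 by omega]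
  · rw [show (n + 1) / 2 = n / 2 + 1 by omega]
    push_cast
    ring_nf

theorem bCoeff_pos (hα : -1 < α) (n : ℕ) : 0 < bCoeff α n := by
  have : 0 < Real.Gamma (((n + 1) / 2 : ℕ) + α + 1) :=
    Real.Gamma_pos_of_pos (by linarith [Nat.cast_nonneg (α := ℝ) ((n + 1) / 2)])
  have : 0 < Real.Gamma (α + 1) := Real.Gamma_pos_of_pos (by linarith)
  rw [bCoeff_eq]
  positivity

theorem bCoeff_two_mul_add_one (hα : -1 < α) (m : ℕ) :
    bCoeff α (2 * m + 1) = 2 * (m + α + 1) * bCoeff α (2 * m) := by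
  have hm : (m : ℝ) + α + 1 ≠ 0 := by linarith [Nat.cast_nonneg (α := ℝ) m]
  rw [bCoeff_eq, bCoeff_eq, show (2 * m + 1 + 1) / 2 = m + 1 by omega,
    show (2 * m + 1) / 2 = m by omega, show 2 * m / 2 = m by omega, Nat.cast_succ,
    add_right_comm _ 1 α, Real.Gamma_add_one hm]
  ring

theorem bCoeff_two_mul_add_two (α : ℝ) (m : ℕ) :
    bCoeff α (2 * m + 2) = 2 * (m + 1) * bCoeff α (2 * m + 1) := by
  rw [bCoeff_eq, bCoeff_eq, show (2 * m + 2 + 1) / 2 = m + 1 by omega,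
    show (2 * m + 2) / 2 = m + 1 by omega,
    show (2 * m + 1) / 2 = m by omega, Nat.factorial_succ]
  push_cast
  ring

theorem mul_bCoeff_le_bCoeff_succ (hα : -1 < α) (n : ℕ) :
    n * bCoeff α n ≤ bCoeff α (n + 1) := by
  have hb := (bCoeff_pos hα n).le
  obtain ⟨m, rfl | rfl⟩ := Nat.even_or_odd' n
  · rw [bCoeff_two_mul_add_one hα]
    push_cast
    exact mul_le_mul_of_nonneg_right (by linarith) hb
  · rw [bCoeff_two_mul_add_two]
    push_cast
    exact mul_le_mul_of_nonneg_right (by linarith) hb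

theorem summable_norm_pow_div_bCoeff (hα : -1 < α) (z : ℂ) :
    Summable fun n : ℕ => ‖z ^ n / (bCoeff α n : ℂ)‖ := by
  have hb := bCoeff_pos hα
  have hnorm : ∀ n, ‖z ^ n / (bCoeff α n : ℂ)‖ = ‖z‖ ^ n / bCoeff α n := fun n => by
    rw [norm_div, norm_pow, Complex.norm_real, Real.norm_of_nonneg (hb n).le]
  simp_rw [hnorm]
  refine summable_of_ratio_norm_eventually_le (r := 1 / 2) (by norm_num) ?_
  filter_upwards [eventually_ge_atTop (⌈2 * ‖z‖⌉₊ + 1)] with n hn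
  have hn0 : (0 : ℝ) < n := by exact_mod_cast (Nat.succ_pos _).trans_le hn
  have hzn : 2 * ‖z‖ ≤ n := (Nat.le_ceil _).trans (by exact_mod_cast (Nat.le_succ _).trans hn)
  have hterm : ∀ n, 0 ≤ ‖z‖ ^ n / bCoeff α n := fun n => div_nonneg (by positivity) (hb n).le
  rw [Real.norm_of_nonneg (hterm _), Real.norm_of_nonneg (hterm _)]
  calc ‖z‖ ^ (n + 1) / bCoeff α (n + 1)
      ≤ ‖z‖ ^ (n + 1) / (n * bCoeff α n) :=
        div_le_div_of_nonneg_left (by positivity) (mul_pos hn0 (hb n))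
          (mul_bCoeff_le_bCoeff_succ hα n)
    _ = ‖z‖ / n * (‖z‖ ^ n / bCoeff α n) := by
        rw [pow_succ]
        field_simp
    _ ≤ 1 / 2 * (‖z‖ ^ n / bCoeff α n) := by
        refine mul_le_mul_of_nonneg_right ?_ (hterm n)
        rw [div_le_iff₀ hn0]
        linarith

def sonineWeight (α β t : ℝ) : ℝ :=
  (1 - t ^ 2) ^ (β - α - 1) * (1 + t) * |t| ^ (2 * α + 1)

theorem intervalIntegrable_sonineWeight (hα : -1 < α) (hαβ : α < β) :
    IntervalIntegrable (sonineWeight α β) volume (-1) 1 := by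
  have hsq := intervalIntegrable_rpow_mul_one_sub_sq_rpow (a := α + 1) (b := β - α)
    (by linarith) (by linarith)
  have hpos : IntervalIntegrable (fun t : ℝ => |t| ^ (2 * α + 1) * (1 - t ^ 2) ^ (β - α - 1))
      volume 0 1 := by
    refine hsq.congr fun t ht => ?_
    rw [uIoc_of_le zero_le_one] at ht
    simp only [abs_of_pos ht.1]
    ring_nf
  have hsymm := intervalIntegrable_neg_self_of_even (fun t => by simp) hpos
  refine (hsymm.continuousOn_mul (g := fun t => 1 + t) (by fun_prop)).congr fun t _ => ?_
  simp only [sonineWeight]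
  ring

theorem integral_pow_mul_sonineWeight (hα : -1 < α) (hαβ : α < β) (n : ℕ) :
    ∫ t in (-1 : ℝ)..1, t ^ n * sonineWeight α β t =
      Real.Gamma (((n + 1) / 2 : ℕ) + α + 1) * Real.Gamma (β - α) /
        Real.Gamma (((n + 1) / 2 : ℕ) + β + 1) := by
  set k := (n + 1) / 2
  have hint := (intervalIntegrable_sonineWeight hα hαβ).continuousOn_mul
    (g := fun t : ℝ => t ^ n) (by fun_prop)
  have hfold : ∀ t ∈ Ioc (0 : ℝ) 1, t ^ n * sonineWeight α β t + (-t) ^ n * sonineWeight α β (-t)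
      = 2 * (t ^ (2 * (k + α + 1) - 1) * (1 - t ^ 2) ^ (β - α - 1)) := by
    intro t ht
    have hexp : t ^ (2 * (k + α + 1) - 1) = t ^ (2 * k) * t ^ (2 * α + 1) := by
      rw [show 2 * (k + α + 1) - 1 = ((2 * k : ℕ) : ℝ) + (2 * α + 1) by push_cast; ring,
        Real.rpow_add ht.1, Real.rpow_natCast]
    simp only [sonineWeight, neg_sq, abs_neg, abs_of_pos ht.1]
    calc _ = (t ^ n * (1 + t) + (-t) ^ n * (1 - t)) *
          ((1 - t ^ 2) ^ (β - α - 1) * t ^ (2 * α + 1)) := by ring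
      _ = _ := by rw [pow_mul_one_add_add_neg_pow_mul_one_sub, hexp]; ring
  rw [integral_neg_self_eq_integral_add_comp_neg hint,
    intervalIntegral.integral_congr_ae (ae_of_all _ fun t ht => hfold t
      (by rwa [uIoc_of_le zero_le_one] at ht)),
    intervalIntegral.integral_const_mul,
    integral_rpow_mul_one_sub_sq_rpow (by linarith [Nat.cast_nonneg (α := ℝ) k]) (by linarith),
    show (k : ℝ) + α + 1 + (β - α) = k + β + 1 by ring]
  ring

theorem sonineConst_mul_integral_pow_mul_sonineWeight (hα : -1 < α) (hαβ : α < β) (n : ℕ) :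
    sonineConst α β * ∫ t in (-1 : ℝ)..1, t ^ n * sonineWeight α β t =
      bCoeff α n / bCoeff β n := by
  have hk := Nat.cast_nonneg (α := ℝ) ((n + 1) / 2)
  have := Real.Gamma_pos_of_pos (show 0 < β - α by linarith)
  have := Real.Gamma_pos_of_pos (show 0 < α + 1 by linarith)
  have := Real.Gamma_pos_of_pos (show 0 < β + 1 by linarith)
  have := Real.Gamma_pos_of_pos (show 0 < ((n + 1) / 2 : ℕ) + α + 1 by linarith)
  have := Real.Gamma_pos_of_pos (show 0 < ((n + 1) / 2 : ℕ) + β + 1 by linarith)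
  rw [integral_pow_mul_sonineWeight hα hαβ, sonineConst, bCoeff_eq, bCoeff_eq]
  field_simp

theorem sonineConst_mul_pow_div_bCoeff_mul_integral (hα : -1 < α) (hαβ : α < β) (z : ℂ) (n : ℕ) :
    (sonineConst α β : ℂ) *
        (z ^ n / bCoeff α n * ∫ t in (-1 : ℝ)..1, (t : ℂ) ^ n * (sonineWeight α β t : ℂ)) =
      z ^ n / bCoeff β n := by
  have hbα : (bCoeff α n : ℂ) ≠ 0 := by exact_mod_cast (bCoeff_pos hα n).ne'
  have hbβ : (bCoeff β n : ℂ) ≠ 0 := by exact_mod_cast (bCoeff_pos (hα.trans hαβ) n).ne'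
  have hmoment : ∫ t in (-1 : ℝ)..1, (t : ℂ) ^ n * (sonineWeight α β t : ℂ) =
      ((∫ t in (-1 : ℝ)..1, t ^ n * sonineWeight α β t : ℝ) : ℂ) := by
    rw [← intervalIntegral.integral_ofReal]
    push_cast
    rfl
  calc _ = z ^ n / bCoeff α n * ((sonineConst α β * ∫ t in (-1 : ℝ)..1,
        t ^ n * sonineWeight α β t : ℝ) : ℂ) := by rw [hmoment]; push_cast; ring
    _ = _ := by
      rw [sonineConst_mul_integral_pow_mul_sonineWeight hα hαβ]
      push_cast
      field_simp

end

end DunklSonine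

open DunklSonine in
/-- Sonine product formula for the Dunkl kernel:
`E_β(λx) = a_{α,β} ∫_{-1}^1 E_α(λxt)(1-t²)^{β-α-1}(1+t)|t|^{2α+1} dt`. -/
theorem dunklKernel_sonine (α β : ℝ) (hα : -(1 / 2) < α) (hαβ : α < β)
    (lam : ℂ) (x : ℝ) :
    dunklKernel β (lam * x) =
      (sonineConst α β : ℂ) *
        ∫ t in (-1 : ℝ)..1, dunklKernel α (lam * x * t) *
          (((1 - t ^ 2) ^ (β - α - 1) * (1 + t) * |t| ^ (2 * α + 1) : ℝ) : ℂ) := by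
  have hα' : -1 < α := by linarith
  set z : ℂ := lam * x
  have hkernel : ∀ t : ℝ, dunklKernel α (z * t) = ∑' n, z ^ n / bCoeff α n * (t : ℂ) ^ n :=
    fun t => tsum_congr fun n => by ring
  have hweight : IntervalIntegrable (fun t => (sonineWeight α β t : ℂ)) volume (-1) 1 :=
    intervalIntegrable_iff.2
      (intervalIntegrable_iff.1 (intervalIntegrable_sonineWeight hα' hαβ)).ofReal
  have hsum := hasSum_integral_tsum_mul_pow (summable_norm_pow_div_bCoeff hα' z) hweight
  change _ = _ * ∫ t in (-1 : ℝ)..1, dunklKernel α (z * t) * (sonineWeight α β t : ℂ)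
  simp_rw [hkernel, ← hsum.tsum_eq, ← tsum_mul_left, dunklKernel]
  exact tsum_congr fun n => (sonineConst_mul_pow_div_bCoeff_mul_integral hα' hαβ z n).symm
end
end

section
/- Let α, β be real numbers with -1/2 < α < β and let n ∈ ℕ. Then ∫_{-1}^{1} t^{2n}(1-t²)^{β-α-1}(1+t)|t|^{2α+1} dt = Γ(β-α)Γ(n+α+1)/Γ(n+β+1), and ∫_{-1}^{1} t^{2n+1}(1-t²)^{β-α-1}(1+t)|t|^{2α+1} dt = Γ(β-α)Γ(n+α+2)/Γ(n+β+2). -/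
open MeasureTheory Filter
open scoped Real

noncomputable section

/-! The factor `(1 - t²)^(β-α-1) |t|^(2α+1)` of the Sonine kernel is even, so after splitting off
`(1 + t)` every moment of the kernel is one even moment of this weight plus one odd moment, which
vanishes. The moment of order `2m` is twice the integral over `[0, 1]`, and there the substitution
`u = t²` turns it into the Beta integral `B(m + α + 1, β - α)`. -/

open intervalIntegral Set

section Parity

variable {E : Type*} [NormedAddCommGroup E] {f : ℝ → E} {a : ℝ}

theorem IntervalIntegrable.neg_zero_of_even (hf : ∀ t, f (-t) = f t)
    (h : IntervalIntegrable f volume 0 a) : IntervalIntegrable f volume (-a) 0 := by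
  simpa [hf] using ((IntervalIntegrable.iff_comp_neg (f := f)).mp h).symm

variable [NormedSpace ℝ E]

theorem integral_neg_self_of_even (hf : ∀ t, f (-t) = f t) (h : IntervalIntegrable f volume 0 a) :
    ∫ t in -a..a, f t = (2 : ℝ) • ∫ t in 0..a, f t := by
  have hrefl : ∫ t in -a..0, f t = ∫ t in 0..a, f t := by
    simpa [hf] using (integral_comp_neg (a := 0) (b := a) f).symm
  rw [← integral_add_adjacent_intervals (h.neg_zero_of_even hf) h, hrefl, two_smul]

theorem integral_neg_self_of_odd (hf : ∀ t, f (-t) = -f t) : ∫ t in -a..a, f t = 0 := by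
  have hanti : ∫ t in -a..a, f t = -∫ t in -a..a, f t := by
    simpa [hf, intervalIntegral.integral_neg] using (integral_comp_neg (a := -a) (b := a) f).symm
  have htwice : (2 : ℝ) • ∫ t in -a..a, f t = 0 := by
    rw [two_smul]; nth_rewrite 2 [hanti]; exact add_neg_cancel _
  exact (smul_eq_zero.mp htwice).resolve_left two_ne_zero

end Parity

section Substitution

variable (g : ℝ → ℝ)

theorem integral_comp_sq_mul_two_mul :
    ∫ t in (0 : ℝ)..1, g (t ^ 2) * (2 * t) = ∫ u in (0 : ℝ)..1, g u := by
  simpa using integral_comp_mul_deriv_of_deriv_nonneg (a := 0) (b := 1) (g := g)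
    (f := fun t : ℝ => t ^ 2) (f' := fun t => 2 * t) (continuous_pow 2).continuousOn
    (fun t _ => by simpa using hasDerivAt_pow 2 t) (fun t ht => by simp at ht; linarith [ht.1])

theorem intervalIntegrable_comp_sq_mul_two_mul_iff :
    IntervalIntegrable (fun t : ℝ => g (t ^ 2) * (2 * t)) volume 0 1 ↔
      IntervalIntegrable g volume 0 1 := by
  simpa using integrable_comp_mul_deriv_iff_of_deriv_nonneg (a := 0) (b := 1) (g := g)
    (f := fun t : ℝ => t ^ 2) (f' := fun t => 2 * t) (continuous_pow 2).continuousOn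
    (fun t _ => by simpa using hasDerivAt_pow 2 t) (fun t ht => by simp at ht; linarith [ht.1])

end Substitution

section Beta

variable {a b : ℝ}

theorem integral_rpow_mul_one_sub_rpow (ha : 0 < a) (hb : 0 < b) :
    ∫ u in (0 : ℝ)..1, u ^ (a - 1) * (1 - u) ^ (b - 1) =
      Real.Gamma a * Real.Gamma b / Real.Gamma (a + b) := by
  apply Complex.ofReal_injective
  have hbeta := Complex.betaIntegral_eq_Gamma_mul_div a b (by simpa) (by simpa)
  rw [← Complex.ofReal_add, Complex.Gamma_ofReal, Complex.Gamma_ofReal,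
    Complex.Gamma_ofReal, Complex.betaIntegral] at hbeta
  push_cast
  rw [← hbeta, ← intervalIntegral.integral_ofReal]
  refine integral_congr fun u hu => ?_
  rw [uIcc_of_le zero_le_one] at hu
  push_cast
  rw [Complex.ofReal_cpow hu.1, Complex.ofReal_cpow (sub_nonneg.mpr hu.2)]
  push_cast
  ring

theorem intervalIntegrable_rpow_mul_one_sub_rpow (ha : 0 < a) (hb : 0 < b) :
    IntervalIntegrable (fun u : ℝ => u ^ (a - 1) * (1 - u) ^ (b - 1)) volume 0 1 := by
  refine intervalIntegrable_of_integral_ne_zero ?_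
  rw [integral_rpow_mul_one_sub_rpow ha hb]
  exact (div_pos (mul_pos (Real.Gamma_pos_of_pos ha) (Real.Gamma_pos_of_pos hb))
    (Real.Gamma_pos_of_pos (add_pos ha hb))).ne'

theorem sq_rpow_sub_one_mul_self {t : ℝ} (ht : 0 < t) (a : ℝ) :
    (t ^ 2) ^ (a - 1) * t = t ^ (2 * a - 1) := by
  rw [← Real.rpow_natCast, ← Real.rpow_mul ht.le, ← Real.rpow_add_one ht.ne']
  push_cast
  ring_nf

variable (a b) in
theorem eqOn_beta_comp_sq_mul_two_mul :
    EqOn (fun t : ℝ => (t ^ 2) ^ (a - 1) * (1 - t ^ 2) ^ (b - 1) / 2 * (2 * t))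
      (fun t => t ^ (2 * a - 1) * (1 - t ^ 2) ^ (b - 1)) (Ioo 0 1) := fun t ht => by
  dsimp only
  rw [← sq_rpow_sub_one_mul_self ht.1]
  ring

theorem intervalIntegrable_rpow_mul_one_sub_sq_rpow (ha : 0 < a) (hb : 0 < b) :
    IntervalIntegrable (fun t : ℝ => t ^ (2 * a - 1) * (1 - t ^ 2) ^ (b - 1)) volume 0 1 := by
  have hbeta := (intervalIntegrable_rpow_mul_one_sub_rpow ha hb).div_const 2
  refine ((intervalIntegrable_comp_sq_mul_two_mul_iff _).mpr hbeta).congr_uIoo ?_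
  rw [uIoo_of_le zero_le_one]
  exact eqOn_beta_comp_sq_mul_two_mul a b

theorem integral_rpow_mul_one_sub_sq_rpow (ha : 0 < a) (hb : 0 < b) :
    ∫ t in (0 : ℝ)..1, t ^ (2 * a - 1) * (1 - t ^ 2) ^ (b - 1) =
      Real.Gamma a * Real.Gamma b / (2 * Real.Gamma (a + b)) := by
  rw [← integral_congr_Ioo_of_le zero_le_one (eqOn_beta_comp_sq_mul_two_mul a b),
    integral_comp_sq_mul_two_mul (fun u => u ^ (a - 1) * (1 - u) ^ (b - 1) / 2),
    intervalIntegral.integral_div, integral_rpow_mul_one_sub_rpow ha hb, div_div, mul_comm 2]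

end Beta

section Moments

variable {a b s : ℝ}

theorem eqOn_pow_mul_one_sub_sq_rpow_mul_abs_rpow {j : ℕ} (hj : (j : ℝ) + s = 2 * a - 1) :
    EqOn (fun t : ℝ => t ^ j * ((1 - t ^ 2) ^ (b - 1) * |t| ^ s))
      (fun t => t ^ (2 * a - 1) * (1 - t ^ 2) ^ (b - 1)) (Ioo 0 1) := fun t ht => by
  dsimp only
  rw [abs_of_pos ht.1, ← hj, Real.rpow_add ht.1, Real.rpow_natCast]
  ring

theorem intervalIntegrable_pow_mul_one_sub_sq_rpow_mul_abs_rpow {j : ℕ} (ha : 0 < a) (hb : 0 < b)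
    (hj : (j : ℝ) + s = 2 * a - 1) :
    IntervalIntegrable (fun t : ℝ => t ^ j * ((1 - t ^ 2) ^ (b - 1) * |t| ^ s)) volume 0 1 := by
  refine (intervalIntegrable_rpow_mul_one_sub_sq_rpow ha hb).congr_uIoo ?_
  rw [uIoo_of_le zero_le_one]
  exact (eqOn_pow_mul_one_sub_sq_rpow_mul_abs_rpow hj).symm

theorem intervalIntegrable_one_sub_sq_rpow_mul_abs_rpow (hb : 0 < b) (hs : -1 < s) :
    IntervalIntegrable (fun t : ℝ => (1 - t ^ 2) ^ (b - 1) * |t| ^ s) volume (-1) 1 := by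
  have h : IntervalIntegrable (fun t : ℝ => (1 - t ^ 2) ^ (b - 1) * |t| ^ s) volume 0 1 := by
    simpa using intervalIntegrable_pow_mul_one_sub_sq_rpow_mul_abs_rpow (j := 0)
      (a := (s + 1) / 2) (by linarith) hb (by push_cast; ring)
  exact (h.neg_zero_of_even fun t => by simp).trans h

theorem integral_pow_mul_one_sub_sq_rpow_mul_abs_rpow_of_even {j : ℕ} (hjev : Even j)
    (ha : 0 < a) (hb : 0 < b) (hj : (j : ℝ) + s = 2 * a - 1) :
    ∫ t in (-1 : ℝ)..1, t ^ j * ((1 - t ^ 2) ^ (b - 1) * |t| ^ s) =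
      Real.Gamma a * Real.Gamma b / Real.Gamma (a + b) := by
  rw [integral_neg_self_of_even (fun t => by simp [hjev.neg_pow])
      (intervalIntegrable_pow_mul_one_sub_sq_rpow_mul_abs_rpow ha hb hj),
    integral_congr_Ioo_of_le zero_le_one (eqOn_pow_mul_one_sub_sq_rpow_mul_abs_rpow hj),
    integral_rpow_mul_one_sub_sq_rpow ha hb, smul_eq_mul]
  have := (Real.Gamma_pos_of_pos (add_pos ha hb)).ne'
  field_simp

theorem integral_pow_mul_one_sub_sq_rpow_mul_abs_rpow_of_odd {j : ℕ} (hjodd : Odd j) :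
    ∫ t in (-1 : ℝ)..1, t ^ j * ((1 - t ^ 2) ^ (b - 1) * |t| ^ s) = 0 :=
  integral_neg_self_of_odd fun t => by simp [hjodd.neg_pow]

theorem integral_pow_mul_one_sub_sq_rpow_mul_one_add_mul_abs_rpow (k : ℕ) (hb : 0 < b)
    (hs : -1 < s) :
    ∫ t in (-1 : ℝ)..1, t ^ k * ((1 - t ^ 2) ^ (b - 1) * (1 + t) * |t| ^ s) =
      (∫ t in (-1 : ℝ)..1, t ^ k * ((1 - t ^ 2) ^ (b - 1) * |t| ^ s)) +
        ∫ t in (-1 : ℝ)..1, t ^ (k + 1) * ((1 - t ^ 2) ^ (b - 1) * |t| ^ s) := by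
  have hw := intervalIntegrable_one_sub_sq_rpow_mul_abs_rpow hb hs
  rw [← integral_add (hw.continuousOn_mul (continuous_pow k).continuousOn)
    (hw.continuousOn_mul (continuous_pow (k + 1)).continuousOn)]
  exact integral_congr fun t _ => by ring

end Moments

/-- The moment integrals `I_n(α,β)` of the Sonine kernel. -/
theorem sonine_moment_integrals (α β : ℝ) (hα : -(1 / 2) < α) (hαβ : α < β) (n : ℕ) :
    (∫ t in (-1 : ℝ)..1,
        t ^ (2 * n) * ((1 - t ^ 2) ^ (β - α - 1) * (1 + t) * |t| ^ (2 * α + 1)) =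
      Real.Gamma (β - α) * Real.Gamma (n + α + 1) / Real.Gamma (n + β + 1)) ∧
    (∫ t in (-1 : ℝ)..1,
        t ^ (2 * n + 1) * ((1 - t ^ 2) ^ (β - α - 1) * (1 + t) * |t| ^ (2 * α + 1)) =
      Real.Gamma (β - α) * Real.Gamma (n + α + 2) / Real.Gamma (n + β + 2)) := by
  have hb : 0 < β - α := by linarith
  have hs : -1 < 2 * α + 1 := by linarith
  have hn : (0 : ℝ) ≤ n := n.cast_nonneg
  constructor
  · rw [integral_pow_mul_one_sub_sq_rpow_mul_one_add_mul_abs_rpow _ hb hs,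
      integral_pow_mul_one_sub_sq_rpow_mul_abs_rpow_of_odd (odd_two_mul_add_one n), add_zero,
      integral_pow_mul_one_sub_sq_rpow_mul_abs_rpow_of_even (even_two_mul n)
        (a := n + α + 1) (by linarith) hb (by push_cast; ring),
      show (n : ℝ) + α + 1 + (β - α) = n + β + 1 by ring, mul_comm]
  · rw [integral_pow_mul_one_sub_sq_rpow_mul_one_add_mul_abs_rpow _ hb hs,
      integral_pow_mul_one_sub_sq_rpow_mul_abs_rpow_of_odd (odd_two_mul_add_one n), zero_add,
      integral_pow_mul_one_sub_sq_rpow_mul_abs_rpow_of_even ⟨n + 1, by ring⟩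
        (a := n + α + 2) (by linarith) hb (by push_cast; ring),
      show (n : ℝ) + α + 2 + (β - α) = n + β + 2 by ring, mul_comm]
end
end
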